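/- In the complete graph setting with disturbance only at node i (b_i ≠ 0, b_j = 0 for j ≠ i), the frequency variances satisfy: q_{ω,ii} = b_i²/(2dη) − (n−1)γb_i²/(dn(2d²+γηn)) at the source node and q_{ω,jj} = γb_i²/(dn(2d²+γηn)) for every other node j. Moreover ∂q_{ω,ii}/∂γ < 0 and ∂q_{ω,jj}/∂γ > 0. -/

import Mathlib

/-!
The matrix `J` averages over all nodes, so with a single disturbance `B2 = b_{i0}² E_{i0 i0}` the
entries of `J B2`, `B2 J` and `J B2 J` are `b_{i0}²/n` or `0`, `b_{i0}²/n²` respectively, and the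
variances are obtained by clearing denominators. Both variances are affine in the Möbius function
`γ ↦ γ b_{i0}² / (d n (2d² + γηn))`, which is increasing because `2d² > 0`; the source variance
carries it with the negative coefficient `-(n - 1)`.
-/

open Matrix

lemma Matrix.of_const_mul_diagonal_mul_of_const_apply {ι R : Type*} [Fintype ι] [DecidableEq ι]
    [CommSemiring R] (c : R) (v : ι → R) (i j : ι) :
    (of (fun _ _ => c) * diagonal v * of (fun _ _ => c) : Matrix ι ι R) i j =
      c ^ 2 * ∑ k, v k := by
  rw [mul_apply, Finset.mul_sum]
  simp only [mul_diagonal, of_apply]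
  exact Finset.sum_congr rfl fun _ _ => by ring

lemma hasDerivAt_mul_div_add_mul {a p q x : ℝ} (hx : p + x * q ≠ 0) :
    HasDerivAt (fun g => g * a / (p + g * q)) (a * p / (p + x * q) ^ 2) x :=
  (((hasDerivAt_id' x).mul_const a).div
    (((hasDerivAt_id' x).mul_const q).const_add p) hx).congr_deriv (by ring)

/-- Complete graph with a single disturbance at node `i0`: explicit source and non-source
frequency variances, and their monotonicity in the line weight `γ`. -/
theorem stmt_11 (n : ℕ) (hn : 2 ≤ n) (η d γ : ℝ) (hη : 0 < η) (hd : 0 < d) (hγ : 0 < γ)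
    (b : Fin n → ℝ) (i0 : Fin n) (hb0 : ∀ j, j ≠ i0 → b j = 0) (hbi : b i0 ≠ 0) :
    let α := d / η
    let B2 : Matrix (Fin n) (Fin n) ℝ := Matrix.diagonal fun i => (b i) ^ 2
    let J : Matrix (Fin n) (Fin n) ℝ := Matrix.of fun _ _ => 1 / (n : ℝ)
    let Qω : Matrix (Fin n) (Fin n) ℝ :=
      (1 / η ^ 2) • ((1 / (2 * α)) • B2
        + (α / (2 * α ^ 2 + γ * n / η) - 1 / (2 * α)) • (J * B2 + B2 * J)
        + (1 / α - 2 * α / (2 * α ^ 2 + γ * n / η)) • (J * B2 * J))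
    Qω i0 i0 = (b i0) ^ 2 / (2 * d * η)
        - ((n : ℝ) - 1) * γ * (b i0) ^ 2 / (d * n * (2 * d ^ 2 + γ * η * n)) ∧
    (∀ j, j ≠ i0 → Qω j j = γ * (b i0) ^ 2 / (d * n * (2 * d ^ 2 + γ * η * n))) ∧
    deriv (fun g : ℝ => (b i0) ^ 2 / (2 * d * η)
        - ((n : ℝ) - 1) * g * (b i0) ^ 2 / (d * n * (2 * d ^ 2 + g * η * n))) γ < 0 ∧
    0 < deriv (fun g : ℝ =>
        g * (b i0) ^ 2 / (d * n * (2 * d ^ 2 + g * η * n))) γ := by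
  intro α B2 J Qω
  have hn1 : (1 : ℝ) < n := by exact_mod_cast hn
  have hsum : ∑ k, b k ^ 2 = b i0 ^ 2 :=
    Fintype.sum_eq_single i0 fun k hk => by rw [hb0 k hk, zero_pow two_ne_zero]
  have hQ : ∀ j, Qω j j = (1 / η ^ 2) * ((1 / (2 * α)) * b j ^ 2
      + (α / (2 * α ^ 2 + γ * n / η) - 1 / (2 * α)) * (2 * (b j ^ 2 / n))
      + (1 / α - 2 * α / (2 * α ^ 2 + γ * n / η)) * (b i0 ^ 2 / n ^ 2)) := by
    intro j
    simp only [Qω, J, B2, Matrix.add_apply, Matrix.smul_apply, smul_eq_mul, diagonal_apply_eq,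
      mul_diagonal, diagonal_mul, of_apply, of_const_mul_diagonal_mul_of_const_apply, hsum]
    ring
  have hf : HasDerivAt (fun g => g * b i0 ^ 2 / (d * n * (2 * d ^ 2 + g * η * n)))
      (b i0 ^ 2 / (d * n) * (2 * d ^ 2) / (2 * d ^ 2 + γ * (η * n)) ^ 2) γ := by
    convert hasDerivAt_mul_div_add_mul (a := b i0 ^ 2 / (d * n)) (x := γ)
      (ne_of_gt (by positivity : 0 < 2 * d ^ 2 + γ * (η * n))) using 1
    funext g
    rw [mul_assoc g η, mul_div_assoc, mul_div_assoc, div_div]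
  have hsource := (hf.const_mul ((n : ℝ) - 1)).const_sub ((b i0) ^ 2 / (2 * d * η))
  refine ⟨?_, fun j hj => ?_, ?_, ?_⟩
  · rw [hQ]
    simp only [α]
    field_simp
    ring
  · rw [hQ, hb0 j hj]
    simp only [α]
    field_simp
    ring
  · simp only [mul_div_assoc, mul_assoc] at hsource ⊢
    rw [hsource.deriv]
    exact neg_neg_of_pos (mul_pos (by linarith) (by positivity))
  · rw [hf.deriv]
    positivity
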